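/- Under G(n, p_n) with p_n = Ω(n^{-c}), 0 ≤ c < 1/2: for all ε, δ > 0 there is N such that for all n ≥ N, P[MAXEB(G_n) < (1+δ)·MINEB(G_n)] > 1-ε, where EB(G,φ) = θ(⌊n/2⌋, φ, G), MINEB = min over layouts φ, MAXEB = max over layouts φ. -/

import Mathlib

open MeasureTheory ProbabilityTheory Filter
open scoped ENNReal NNReal

/-- Index type for potential edges: 2-element subsets of the vertex set. -/
abbrev EdgeIdx (n : ℕ) := {e : Finset (Fin n) // e.card = 2}

/-- The Erdős–Rényi measure `G(n,p)`: each potential edge is present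
independently with probability `p`. -/
noncomputable def erMeasure (n : ℕ) (p : ℝ≥0∞) (hp : p ≤ 1) :
    Measure (EdgeIdx n → Bool) :=
  Measure.pi fun _ => (PMF.bernoulli p.toNNReal
    (by simpa using ENNReal.toNNReal_mono ENNReal.one_ne_top hp)).toMeasure

/-- The cut size `c(S)`: number of present edges with one endpoint in `S`
and the other outside `S`. -/
noncomputable def cut (n : ℕ) (S : Finset (Fin n)) (G : EdgeIdx n → Bool) : ℕ :=
  letI := Classical.decEq (Fin n)
  (Finset.univ.filter fun e : EdgeIdx n =>
    G e = true ∧ (∃ u ∈ e.1, u ∈ S) ∧ (∃ v ∈ e.1, v ∉ S)).card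

/-- `L(i, φ, G)`: vertices placed at the (1-indexed) positions `1, …, i`
by the layout `φ` (positions in `Fin n` are 0-indexed). -/
def Lset (n : ℕ) (φ : Fin n ≃ Fin n) (i : ℕ) : Finset (Fin n) :=
  Finset.univ.filter fun u => (φ u : ℕ) < i

/-- `θ(i, φ, G)`: number of present edges crossing position `i`. -/
noncomputable def theta (n : ℕ) (G : EdgeIdx n → Bool) (φ : Fin n ≃ Fin n) (i : ℕ) : ℕ :=
  cut n (Lset n φ i) G

/-- Cutwidth of a layout: `max_{1 ≤ i ≤ n} θ(i, φ, G)`. -/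
noncomputable def CW (n : ℕ) (G : EdgeIdx n → Bool) (φ : Fin n ≃ Fin n) : ℕ :=
  (Finset.Icc 1 n).sup (theta n G φ)

/-- `u` and `v` are adjacent in `G`. -/
def adj (n : ℕ) (G : EdgeIdx n → Bool) (u v : Fin n) : Prop :=
  u ≠ v ∧ ∃ e : EdgeIdx n, G e = true ∧ e.1 = {u, v}

/-- `δ(i, φ, G)`: number of vertices at positions `≤ i` with a neighbour at a
position `> i`. -/
noncomputable def vsep (n : ℕ) (G : EdgeIdx n → Bool) (φ : Fin n ≃ Fin n) (i : ℕ) : ℕ :=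
  letI := Classical.dec
  (Finset.univ.filter fun u =>
    (φ u : ℕ) < i ∧ ∃ v, i ≤ (φ v : ℕ) ∧ adj n G u v).card

/-- Vertex separation of a layout: `max_{1 ≤ i ≤ n} δ(i, φ, G)`. -/
noncomputable def VS (n : ℕ) (G : EdgeIdx n → Bool) (φ : Fin n ≃ Fin n) : ℕ :=
  (Finset.Icc 1 n).sup (vsep n G φ)

/-!
For a fixed layout, the bisection cost is a sum of `m = ⌊n/2⌋ ⌈n/2⌉` independent Bernoulli(`p`)
edge indicators, so by Hoeffding's inequality it lies within `γ m p` of its mean `m p` except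
with probability `2 exp (-2 γ² m p²)`. As `m p² ≳ n^(2 - 2c)` outgrows `log n! ≤ n log n` when
`c < 1/2`, a union bound over the `n!` layouts shows that w.h.p. every layout has cost in
`((1 - γ) m p, (1 + γ) m p)`, and for `γ = δ / (2 + δ)` one has `1 + γ = (1 + δ) (1 - γ)`.
-/

open Real Topology

section Crossing

variable {n : ℕ}

noncomputable def crossingEdges (S : Finset (Fin n)) : Finset (EdgeIdx n) :=
  letI := Classical.decEq (Fin n)
  Finset.univ.filter fun e : EdgeIdx n => (∃ u ∈ e.1, u ∈ S) ∧ (∃ v ∈ e.1, v ∉ S)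

lemma mem_crossingEdges {S : Finset (Fin n)} {e : EdgeIdx n} :
    e ∈ crossingEdges S ↔ (∃ u ∈ e.1, u ∈ S) ∧ (∃ v ∈ e.1, v ∉ S) := by
  simp [crossingEdges]

lemma cast_cut_eq_sum (S : Finset (Fin n)) (G : EdgeIdx n → Bool) :
    (cut n S G : ℝ) = ∑ e ∈ crossingEdges S, ((G e).toNat : ℝ) := by
  classical
  have : cut n S G = ((crossingEdges S).filter fun e => G e = true).card := by
    unfold cut
    congr 1
    ext e
    simp only [Finset.mem_filter, Finset.mem_univ, true_and, mem_crossingEdges]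
    tauto
  rw [this, Finset.card_filter, Nat.cast_sum]
  refine Finset.sum_congr rfl fun e _ => ?_
  cases G e <;> rfl

lemma card_crossingEdges (S : Finset (Fin n)) :
    (crossingEdges S).card = S.card * (n - S.card) := by
  classical
  have hc : (Sᶜ).card = n - S.card := by rw [Finset.card_compl, Fintype.card_fin]
  rw [← hc, ← Finset.card_product]
  symm
  refine Finset.card_bij (fun uv huv => ⟨{uv.1, uv.2}, Finset.card_pair ?_⟩) ?_ ?_ ?_
  · simp only [Finset.mem_product, Finset.mem_compl] at huv
    exact ne_of_mem_of_not_mem huv.1 huv.2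
  · intro uv huv
    simp only [Finset.mem_product, Finset.mem_compl] at huv
    exact mem_crossingEdges.2 ⟨⟨uv.1, by simp, huv.1⟩, ⟨uv.2, by simp, huv.2⟩⟩
  · intro a ha b hb hpair
    simp only [Finset.mem_product, Finset.mem_compl] at ha hb
    have hab : ({a.1, a.2} : Finset (Fin n)) = {b.1, b.2} := congrArg Subtype.val hpair
    have h1 : a.1 ∈ ({b.1, b.2} : Finset (Fin n)) := hab ▸ by simp
    have h2 : a.2 ∈ ({b.1, b.2} : Finset (Fin n)) := hab ▸ by simp
    simp only [Finset.mem_insert, Finset.mem_singleton] at h1 h2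
    refine Prod.ext ?_ ?_
    · rcases h1 with h | h
      · exact h
      · exact absurd (h ▸ ha.1) hb.2
    · rcases h2 with h | h
      · exact absurd (h ▸ hb.1) ha.2
      · exact h
  · intro e he
    obtain ⟨⟨u, hu, huS⟩, ⟨v, hv, hvS⟩⟩ := mem_crossingEdges.1 he
    refine ⟨(u, v), by simp [huS, hvS], Subtype.ext ?_⟩
    refine Finset.eq_of_subset_of_card_le
      (Finset.insert_subset_iff.2 ⟨hu, Finset.singleton_subset_iff.2 hv⟩) ?_
    rw [e.2, Finset.card_pair (ne_of_mem_of_not_mem huS hvS)]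

lemma card_Lset (φ : Fin n ≃ Fin n) {i : ℕ} (hi : i ≤ n) : (Lset n φ i).card = i := by
  classical
  have : Lset n φ i =
      (Finset.univ.filter fun j : Fin n => (j : ℕ) < i).map φ.symm.toEmbedding := by
    ext u
    simp [Lset]
  rw [this, Finset.card_map, Fin.card_filter_val_lt]
  exact min_eq_right hi

end Crossing

lemma iSup_lt_mul_iInf_of_forall_abs_sub_lt {ι : Type*} [Finite ι] [Nonempty ι] (f : ι → ℕ)
    {a γ r : ℝ} (hγ : 0 ≤ γ) (hr : 0 < r) (hγr : 1 + γ ≤ r * (1 - γ))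
    (hf : ∀ i, |(f i : ℝ) - a| < γ * a) :
    ((⨆ i, f i : ℕ) : ℝ) < r * ((⨅ i, f i : ℕ) : ℝ) := by
  obtain ⟨i, hi⟩ := exists_eq_ciSup_of_finite (f := f)
  obtain ⟨j, hj⟩ := exists_eq_ciInf_of_finite (f := f)
  rw [← hi, ← hj]
  have hfi := (abs_lt.1 (hf i)).2
  have hfj := (abs_lt.1 (hf j)).1
  have ha : 0 ≤ a := (pos_of_mul_pos_right ((abs_nonneg _).trans_lt (hf i)) hγ).le
  calc (f i : ℝ) < (1 + γ) * a := by linarith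
    _ ≤ r * ((1 - γ) * a) := by nlinarith
    _ < r * f j := by gcongr; linarith

lemma tendsto_factorial_mul_exp_neg_rpow {b s : ℝ} (hb : 0 < b) (hs : 1 < s) :
    Tendsto (fun n : ℕ => (n.factorial : ℝ) * exp (-(b * (n : ℝ) ^ s))) atTop (𝓝 0) := by
  have hexponent : Tendsto (fun x : ℝ => x * log x - b * x ^ s) atTop atBot := by
    have hlog : Tendsto (fun x : ℝ => log x / x ^ (s - 1) - b) atTop (𝓝 (0 - b)) :=
      (isLittleO_log_rpow_atTop (by linarith)).tendsto_div_nhds_zero.sub_const b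
    refine ((tendsto_rpow_atTop (by linarith)).atTop_mul_neg (by linarith) hlog).congr' ?_
    filter_upwards [eventually_gt_atTop 0] with x hx
    rw [mul_sub, ← mul_div_assoc, mul_div_right_comm, ← rpow_sub hx, sub_sub_cancel, rpow_one]
    ring
  have hbound : ∀ n : ℕ, (n.factorial : ℝ) * exp (-(b * (n : ℝ) ^ s))
      ≤ exp (n * log n - b * (n : ℝ) ^ s) := by
    intro n
    rcases n.eq_zero_or_pos with rfl | hn
    · simp
    rw [sub_eq_add_neg, exp_add, ← log_pow, exp_log (by positivity)]
    gcongr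
    exact_mod_cast Nat.factorial_le_pow n
  exact squeeze_zero (fun n => by positivity) hbound
    (Real.tendsto_exp_atBot.comp (hexponent.comp tendsto_natCast_atTop_atTop))

lemma sq_mul_rpow_two_sub_le {n : ℕ} (hn : 2 ≤ n) {K q c : ℝ} (hK : 0 ≤ K)
    (hq : K * (n : ℝ) ^ (-c) ≤ q) :
    K ^ 2 * (n : ℝ) ^ (2 - 2 * c) ≤ 8 * ((n / 2 * (n - n / 2) : ℕ) : ℝ) * q ^ 2 := by
  have hn0 : (0 : ℝ) < n := by positivity
  have hcard : n ^ 2 ≤ 8 * (n / 2 * (n - n / 2)) := by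
    obtain ⟨a, b, rfl, hab, hba, ha⟩ : ∃ a b, n = a + b ∧ a ≤ b ∧ b ≤ a + 1 ∧ 1 ≤ a :=
      ⟨n / 2, n - n / 2, by omega, by omega, by omega, by omega⟩
    have : (a + b) / 2 = a := by omega
    rw [this, Nat.add_sub_cancel_left]
    nlinarith
  have hpow : (n : ℝ) ^ (2 - 2 * c) = ((n : ℝ) ^ (-c)) ^ 2 * (n : ℝ) ^ 2 := by
    rw [← Real.rpow_natCast _ 2, ← Real.rpow_mul hn0.le, ← Real.rpow_natCast (n : ℝ) 2,
      ← Real.rpow_add hn0]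
    congr 1; push_cast; ring
  calc K ^ 2 * (n : ℝ) ^ (2 - 2 * c) = (K * (n : ℝ) ^ (-c)) ^ 2 * (n : ℝ) ^ 2 := by
        rw [hpow]; ring
    _ ≤ q ^ 2 * (8 * ((n / 2 * (n - n / 2) : ℕ) : ℝ)) := by
        gcongr
        exact_mod_cast hcard
    _ = _ := by ring

lemma ofReal_one_sub_lt_measure_of_measureReal_compl_lt {Ω : Type*} [MeasurableSpace Ω]
    {μ : Measure Ω} [IsProbabilityMeasure μ] {s : Set Ω} (hs : MeasurableSet s) {ε : ℝ}
    (h : μ.real sᶜ < min ε 1) : ENNReal.ofReal (1 - ε) < μ s := by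
  have hs' : μ.real s = 1 - μ.real sᶜ := by rw [probReal_compl_eq_one_sub hs]; ring
  rw [← ofReal_measureReal, ENNReal.ofReal_lt_ofReal_iff', hs']
  constructor <;> linarith [min_le_left ε 1, min_le_right ε 1]

section Concentration

variable {n : ℕ} {p : ℝ≥0∞} (hp : p ≤ 1)

instance isProbabilityMeasure_erMeasure : IsProbabilityMeasure (erMeasure n p hp) := by
  unfold erMeasure; infer_instance

lemma integral_toNat_erMeasure (e : EdgeIdx n) :
    ∫ G, ((G e).toNat : ℝ) ∂erMeasure n p hp = p.toReal := by
  refine (integral_comp_eval (X := fun _ => Bool) (i := e)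
    (f := fun b : Bool => (b.toNat : ℝ)) Measurable.of_discrete.aestronglyMeasurable).trans ?_
  rw [integral_fintype Integrable.of_finite]
  simp [Measure.real, PMF.toMeasure_apply_singleton _ _ (MeasurableSet.singleton _)]
  exact (congrArg ENNReal.toReal (PMF.bernoulli_apply _ true)).trans
    (by simp [ENNReal.coe_toNNReal_eq_toReal])

lemma iIndepFun_toNat_sub_erMeasure :
    iIndepFun (fun e (G : EdgeIdx n → Bool) => ((G e).toNat : ℝ) - p.toReal) (erMeasure n p hp) :=
  iIndepFun_pi (X := fun _ (b : Bool) => (b.toNat : ℝ) - p.toReal)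
    fun _ => Measurable.of_discrete.aemeasurable

lemma hasSubgaussianMGF_toNat_sub_erMeasure (e : EdgeIdx n) :
    HasSubgaussianMGF (fun G => ((G e).toNat : ℝ) - p.toReal) (1 / 4) (erMeasure n p hp) := by
  have h := hasSubgaussianMGF_of_mem_Icc (μ := erMeasure n p hp)
    (X := fun G => ((G e).toNat : ℝ)) (a := 0) (b := 1) Measurable.of_discrete.aemeasurable
    (ae_of_all _ fun G => by cases G e <;> simp)
  rw [integral_toNat_erMeasure] at h
  convert h
  norm_num

lemma measureReal_le_abs_sum_toNat_sub_le (A : Finset (EdgeIdx n)) {t : ℝ} (ht : 0 ≤ t) :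
    (erMeasure n p hp).real {G | t ≤ |∑ e ∈ A, ((G e).toNat : ℝ) - A.card * p.toReal|}
      ≤ 2 * exp (-(2 * t ^ 2 / A.card)) := by
  set μ := erMeasure n p hp
  set Y : EdgeIdx n → (EdgeIdx n → Bool) → ℝ := fun e G => (G e).toNat - p.toReal
  have hsum : ∀ G, ∑ e ∈ A, ((G e).toNat : ℝ) - A.card * p.toReal = ∑ e ∈ A, Y e G := by
    intro G; simp [Y, Finset.sum_sub_distrib]
  have hexp : -t ^ 2 / (2 * ∑ _e ∈ A, ((1 / 4 : ℝ≥0) : ℝ)) = -(2 * t ^ 2 / A.card) := by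
    push_cast; rw [Finset.sum_const, nsmul_eq_mul]; ring
  have upper : μ.real {G | t ≤ ∑ e ∈ A, Y e G} ≤ exp (-(2 * t ^ 2 / A.card)) := by
    have := HasSubgaussianMGF.measure_sum_ge_le_of_iIndepFun (iIndepFun_toNat_sub_erMeasure hp)
      (s := A) (fun e _ => hasSubgaussianMGF_toNat_sub_erMeasure hp e) ht
    rwa [NNReal.coe_sum, hexp] at this
  have lower : μ.real {G | t ≤ ∑ e ∈ A, -Y e G} ≤ exp (-(2 * t ^ 2 / A.card)) := by
    have := HasSubgaussianMGF.measure_sum_ge_le_of_iIndepFun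
      ((iIndepFun_toNat_sub_erMeasure hp).comp (fun _ x => -x) fun _ => measurable_neg) (s := A)
      (fun e _ => (hasSubgaussianMGF_toNat_sub_erMeasure hp e).neg) ht
    rwa [NNReal.coe_sum, hexp] at this
  calc μ.real {G | t ≤ |∑ e ∈ A, ((G e).toNat : ℝ) - A.card * p.toReal|}
      ≤ μ.real ({G | t ≤ ∑ e ∈ A, Y e G} ∪ {G | t ≤ ∑ e ∈ A, -Y e G}) := by
        refine measureReal_mono (fun G hG => ?_)
        simp only [Set.mem_ofPred_eq, hsum, Set.mem_union, Finset.sum_neg_distrib] at hG ⊢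
        exact le_abs.1 hG
    _ ≤ 2 * exp (-(2 * t ^ 2 / A.card)) := by
        linarith [measureReal_union_le (μ := μ) {G | t ≤ ∑ e ∈ A, Y e G}
          {G | t ≤ ∑ e ∈ A, -Y e G}]

lemma measureReal_exists_theta_far_le {i : ℕ} (hi : i ≤ n) {t : ℝ} (ht : 0 ≤ t) :
    (erMeasure n p hp).real
        {G | ∃ φ : Fin n ≃ Fin n, t ≤ |(theta n G φ i : ℝ) - (i * (n - i) : ℕ) * p.toReal|}
      ≤ n.factorial * (2 * exp (-(2 * t ^ 2 / (i * (n - i) : ℕ)))) := by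
  have hcard (φ : Fin n ≃ Fin n) : (crossingEdges (Lset n φ i)).card = i * (n - i) := by
    rw [card_crossingEdges, card_Lset φ hi]
  rw [Set.ofPred_exists]
  refine (measureReal_iUnion_fintype_le _).trans ?_
  calc ∑ φ : Fin n ≃ Fin n, (erMeasure n p hp).real
          {G | t ≤ |(theta n G φ i : ℝ) - (i * (n - i) : ℕ) * p.toReal|}
      ≤ ∑ _φ : Fin n ≃ Fin n, 2 * exp (-(2 * t ^ 2 / (i * (n - i) : ℕ))) := by
        refine Finset.sum_le_sum fun φ _ => ?_
        simp only [theta, cast_cut_eq_sum, ← hcard φ]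
        exact measureReal_le_abs_sum_toNat_sub_le hp _ ht
    _ = n.factorial * (2 * exp (-(2 * t ^ 2 / (i * (n - i) : ℕ)))) := by
        rw [Finset.sum_const, Finset.card_univ, Fintype.card_equiv (Equiv.refl _),
          Fintype.card_fin, nsmul_eq_mul]

lemma measureReal_exists_theta_half_far_le (hn : 2 ≤ n) {γ K c : ℝ} (hγ : 0 ≤ γ) (hK : 0 ≤ K)
    (hq : K * (n : ℝ) ^ (-c) ≤ p.toReal) :
    (erMeasure n p hp).real {G | ∃ φ : Fin n ≃ Fin n,
        γ * (n / 2 * (n - n / 2) : ℕ) * p.toReal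
          ≤ |(theta n G φ (n / 2) : ℝ) - (n / 2 * (n - n / 2) : ℕ) * p.toReal|}
      ≤ 2 * (n.factorial * exp (-(γ ^ 2 * K ^ 2 / 4 * (n : ℝ) ^ (2 - 2 * c)))) := by
  set m : ℕ := n / 2 * (n - n / 2)
  set q := p.toReal
  have hm : (0 : ℝ) < m := Nat.cast_pos.2 (Nat.mul_pos (by omega) (by omega))
  have hexponent : γ ^ 2 * K ^ 2 / 4 * (n : ℝ) ^ (2 - 2 * c) ≤ 2 * (γ * m * q) ^ 2 / m :=
    calc γ ^ 2 * K ^ 2 / 4 * (n : ℝ) ^ (2 - 2 * c)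
        = γ ^ 2 / 4 * (K ^ 2 * (n : ℝ) ^ (2 - 2 * c)) := by ring
      _ ≤ γ ^ 2 / 4 * (8 * m * q ^ 2) :=
          mul_le_mul_of_nonneg_left (sq_mul_rpow_two_sub_le hn hK hq) (by positivity)
      _ = 2 * (γ * m * q) ^ 2 / m := by field_simp; ring
  calc _ ≤ n.factorial * (2 * exp (-(2 * (γ * m * q) ^ 2 / m))) :=
        measureReal_exists_theta_far_le hp (Nat.div_le_self n 2) (by positivity)
    _ ≤ 2 * (n.factorial * exp (-(γ ^ 2 * K ^ 2 / 4 * (n : ℝ) ^ (2 - 2 * c)))) := by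
        rw [mul_left_comm]
        gcongr

end Concentration

theorem stmt_12_general (c : ℝ) (hc : c < 1 / 2)
    (p : ℕ → ℝ≥0∞) (hp1 : ∀ n, p n ≤ 1)
    (hΩ : ∃ K : ℝ, 0 < K ∧ ∀ᶠ n : ℕ in atTop, K * (n : ℝ) ^ (-c) ≤ (p n).toReal) :
    ∀ ε : ℝ, 0 < ε → ∀ δ : ℝ, 0 < δ → ∃ N : ℕ, ∀ n ≥ N,
      ENNReal.ofReal (1 - ε) <
        erMeasure n (p n) (hp1 n)
          {G | ((⨆ φ : Fin n ≃ Fin n, theta n G φ (n / 2) : ℕ) : ℝ)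
            < (1 + δ) * ((⨅ φ : Fin n ≃ Fin n, theta n G φ (n / 2) : ℕ) : ℝ)} := by
  intro ε hε δ hδ
  obtain ⟨K, hK, hKp⟩ := hΩ
  set γ := δ / (2 + δ)
  have hγ : 0 < γ := by positivity
  have hγδ : 1 + γ = (1 + δ) * (1 - γ) := by simp only [γ]; field_simp; ring
  have hlim := (tendsto_factorial_mul_exp_neg_rpow (b := γ ^ 2 * K ^ 2 / 4) (s := 2 - 2 * c)
    (by positivity) (by linarith)).const_mul 2
  rw [mul_zero] at hlim
  obtain ⟨N, hN⟩ := eventually_atTop.1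
    (hKp.and ((hlim.eventually (gt_mem_nhds (lt_min hε one_pos))).and (eventually_ge_atTop 2)))
  refine ⟨N, fun n hn => ?_⟩
  obtain ⟨hq, hsmall, hn2⟩ := hN n hn
  apply ofReal_one_sub_lt_measure_of_measureReal_compl_lt MeasurableSet.of_discrete
  refine lt_of_le_of_lt ?_ hsmall
  refine (measureReal_mono fun G hG => ?_).trans
    (measureReal_exists_theta_half_far_le (hp1 n) hn2 hγ.le hK.le hq)
  rw [Set.mem_ofPred_eq]
  by_contra! hclose
  exact hG (iSup_lt_mul_iInf_of_forall_abs_sub_lt _ hγ.le (by linarith) hγδ.le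
    fun φ => by simpa [mul_assoc] using hclose φ)

/-- Gap theorem for edge bisection: under `G(n, p_n)` with `p_n = Ω(n^{-c})`,
`0 ≤ c < 1/2`, w.h.p. `MAXEB(G_n) < (1 + δ) MINEB(G_n)`. -/
theorem stmt_12 (c : ℝ) (hc0 : 0 ≤ c) (hc : c < 1 / 2)
    (p : ℕ → ℝ≥0∞) (hp1 : ∀ n, p n ≤ 1)
    (hΩ : ∃ K : ℝ, 0 < K ∧ ∀ᶠ n : ℕ in atTop, K * (n : ℝ) ^ (-c) ≤ (p n).toReal) :
    ∀ ε : ℝ, 0 < ε → ∀ δ : ℝ, 0 < δ → ∃ N : ℕ, ∀ n ≥ N,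
      ENNReal.ofReal (1 - ε) <
        erMeasure n (p n) (hp1 n)
          {G | ((⨆ φ : Fin n ≃ Fin n, theta n G φ (n / 2) : ℕ) : ℝ)
            < (1 + δ) * ((⨅ φ : Fin n ≃ Fin n, theta n G φ (n / 2) : ℕ) : ℝ)} :=
  stmt_12_general c hc p hp1 hΩ
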